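/- The prime spline p is strictly monotonically increasing on (0,∞). -/
import Mathlib


/-- The n-th prime: `pp 1 = 2`, `pp 2 = 3`, ... -/
noncomputable def pp (n : ℕ) : ℕ := Nat.nth Nat.Prime (n - 1)

/-- The number of composites strictly between `pp n` and `pp (n+1)`. -/
noncomputable def gap (n : ℕ) : ℕ := pp (n + 1) - pp n - 1

/-- The left spline piece `a⁻ₙ`. -/
noncomputable def aminus (n : ℕ) (x : ℝ) : ℝ :=
  -2 * (gap (n - 1)) * (x - n) ^ 2 + (x - n) + pp n

/-- The right spline piece `a⁺ₙ`. -/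
noncomputable def aplus (n : ℕ) (x : ℝ) : ℝ :=
  2 * (gap n) * (x - n - 1/2) ^ 2 + (2 * (gap n) + 1) * (x - n - 1/2)
    + (pp n + pp (n + 1)) / 2

theorem stmt9
    (P : ℝ → ℝ)
    (h1 : ∀ x : ℝ, 0 < x → x ≤ 3/2 → P x = x + 1)
    (h2 : ∀ n : ℕ, 2 ≤ n → ∀ x : ℝ, (n : ℝ) - 1/2 ≤ x → x ≤ n → P x = aminus n x)
    (h3 : ∀ n : ℕ, 2 ≤ n → ∀ x : ℝ, (n : ℝ) ≤ x → x ≤ (n : ℝ) + 1/2 → P x = aplus n x)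
    : StrictMonoOn P (Set.Ioi 0) := by
  -- strict monotonicity on the left half-piece [n - 1/2, n]
  have hminus : ∀ n : ℕ, 2 ≤ n → StrictMonoOn P (Set.Icc ((n : ℝ) - 1/2) n) := by
    intro n hn x hx y hy hxy
    rw [h2 n hn x hx.1 hx.2, h2 n hn y hy.1 hy.2]
    have hg : (0 : ℝ) ≤ (gap (n - 1) : ℝ) := Nat.cast_nonneg _
    unfold aminus
    nlinarith [mul_nonneg (mul_nonneg hg (sub_nonneg.2 hx.2)) (le_of_lt (sub_pos.2 hxy)),
      mul_nonneg (mul_nonneg hg (sub_nonneg.2 hy.2)) (le_of_lt (sub_pos.2 hxy))]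
  -- strict monotonicity on the right half-piece [n, n + 1/2]
  have hplus : ∀ n : ℕ, 2 ≤ n → StrictMonoOn P (Set.Icc (n : ℝ) ((n : ℝ) + 1/2)) := by
    intro n hn x hx y hy hxy
    rw [h3 n hn x hx.1 hx.2, h3 n hn y hy.1 hy.2]
    have hg : (0 : ℝ) ≤ (gap n : ℝ) := Nat.cast_nonneg _
    unfold aplus
    nlinarith [mul_nonneg (mul_nonneg hg (sub_nonneg.2 hx.1)) (le_of_lt (sub_pos.2 hxy)),
      mul_nonneg (mul_nonneg hg (sub_nonneg.2 hy.1)) (le_of_lt (sub_pos.2 hxy))]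
  -- strict monotonicity on each generic piece [m/2, (m+1)/2] for m ≥ 3
  have hpiece : ∀ m : ℕ, 3 ≤ m →
      StrictMonoOn P (Set.Icc ((m : ℝ)/2) (((m : ℝ) + 1)/2)) := by
    intro m hm
    rcases Nat.even_or_odd m with ⟨n, hn⟩ | ⟨n, hn⟩
    · -- m = 2n, piece [n, n + 1/2]
      have hn2 : 2 ≤ n := by omega
      have : ((m : ℝ)/2) = (n : ℝ) ∧ (((m : ℝ) + 1)/2) = (n : ℝ) + 1/2 := by
        constructor <;> · subst hn; push_cast; ring
      rw [this.1, this.2]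
      exact hplus n hn2
    · -- m = 2n + 1, piece [(n+1) - 1/2, n+1]
      have hn2 : 2 ≤ n + 1 := by omega
      have : ((m : ℝ)/2) = ((n + 1 : ℕ) : ℝ) - 1/2 ∧ (((m : ℝ) + 1)/2) = ((n + 1 : ℕ) : ℝ) := by
        constructor <;> · subst hn; push_cast; ring
      rw [this.1, this.2]
      exact hminus (n + 1) hn2
  -- by induction: strict monotonicity on (0, m/2] for all m ≥ 3
  have hind : ∀ m : ℕ, 3 ≤ m → StrictMonoOn P (Set.Ioc 0 ((m : ℝ)/2)) := by
    intro m hm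
    induction m with
    | zero => omega
    | succ k ih =>
      rcases Nat.lt_or_ge k 3 with hk | hk
      · -- base case: k + 1 = 3, interval (0, 3/2], P x = x + 1
        obtain rfl : k = 2 := by omega
        have he : (((2:ℕ) + 1 : ℕ) : ℝ) / 2 = 3/2 := by norm_num
        rw [he]
        intro x hx y hy hxy
        have e1 : P x = x + 1 := h1 x hx.1 (by linarith [hx.2])
        have e2 : P y = y + 1 := h1 y hy.1 (by linarith [hy.2])
        rw [e1, e2]; linarith
      · have hstep : StrictMonoOn P (Set.Icc ((k : ℝ)/2) (((k : ℝ) + 1)/2)) := hpiece k hk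
        have hk3 : (3:ℝ) ≤ (k:ℝ) := by exact_mod_cast hk
        have hk0 : (0 : ℝ) < (k : ℝ)/2 := by linarith
        have hle : ((k : ℝ)/2) ≤ ((k : ℝ) + 1)/2 := by linarith
        have hu := (ih hk).union hstep
          (⟨⟨hk0, le_refl _⟩, fun x hx => hx.2⟩ : IsGreatest (Set.Ioc 0 ((k : ℝ)/2)) ((k : ℝ)/2))
          (⟨⟨le_refl _, hle⟩, fun x hx => hx.1⟩ :
            IsLeast (Set.Icc ((k : ℝ)/2) (((k : ℝ) + 1)/2)) ((k : ℝ)/2))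
        rw [Set.Ioc_union_Icc_eq_Ioc hk0 hle] at hu
        have : (((k : ℕ) + 1 : ℕ) : ℝ)/2 = ((k : ℝ) + 1)/2 := by push_cast; ring
        rw [this]
        exact hu
  -- conclude
  intro x hx y hy hxy
  simp only [Set.mem_Ioi] at hx hy
  obtain ⟨m, hm⟩ := exists_nat_ge (2 * y)
  have h3m : 3 ≤ m + 3 := by omega
  have hy2 : y ≤ ((m + 3 : ℕ) : ℝ)/2 := by push_cast; linarith
  exact hind (m + 3) h3m ⟨hx, by linarith⟩ ⟨hy, hy2⟩ hxy
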